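/- arXiv:1006.1416 — 5 statements merged into one kernel-verified Lean document; each statement's English description precedes it below -/
import Mathlib

section
/- The natural map from a Kripke structure M to its quotient M_G sending s to [s]_G is a bisimulation: s and [s]_G satisfy the same transition structure, i.e., if (s,t) ∈ R then ([s]_G,[t]_G) ∈ R_G, and if ([s]_G, O) ∈ R_G then there exists t ∈ S with [t]_G = O and (s,t) ∈ R. -/
/-- The natural map `s ↦ [s]_G` from a Kripke structure to its quotient is a
bisimulation: if `(s,t) ∈ R` then `([s]_G,[t]_G) ∈ R_G`, and if
`([s]_G, O) ∈ R_G` then there exists `t` with `[t]_G = O` and `(s,t) ∈ R`. -/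
theorem quotient_map_bisimulation {S : Type*}
    (G : Subgroup (Equiv.Perm S)) (R : S → S → Prop)
    (hR : ∀ π ∈ G, ∀ s t : S, R s t ↔ R (π s) (π t))
    (orbit : S → Set S)
    (horbit : ∀ s : S, orbit s = {t : S | ∃ π ∈ G, t = π s})
    (RG : Set S → Set S → Prop)
    (hRG : ∀ O P : Set S,
      RG O P ↔ ∃ s t : S, O = orbit s ∧ P = orbit t ∧ R s t) :
    (∀ s t : S, R s t → RG (orbit s) (orbit t)) ∧
      (∀ s : S, ∀ O : Set S, RG (orbit s) O →
        ∃ t : S, orbit t = O ∧ R s t) := by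
  have horbit_perm : ∀ (π : Equiv.Perm S), π ∈ G → ∀ t : S,
      orbit (π t) = orbit t := by
    intro π hπ t
    rw [horbit, horbit]
    ext x
    constructor
    · rintro ⟨σ, hσ, rfl⟩
      exact ⟨σ * π, mul_mem hσ hπ, rfl⟩
    · rintro ⟨τ, hτ, rfl⟩
      exact ⟨τ * π⁻¹, mul_mem hτ (inv_mem hπ), by simp⟩
  constructor
  · intro s t h
    exact (hRG _ _).mpr ⟨s, t, rfl, rfl, h⟩
  · intro s O h
    obtain ⟨s', t', hs, hO, hr⟩ := (hRG _ _).mp h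
    have hself : s ∈ orbit s := by
      rw [horbit]; exact ⟨1, one_mem G, rfl⟩
    rw [hs, horbit] at hself
    obtain ⟨π, hπ, hπs⟩ := hself
    refine ⟨π t', ?_, ?_⟩
    · rw [horbit_perm π hπ, hO]
    · rw [hπs]
      exact (hR π hπ s' t').mp hr
end

section
/- A state s of M is reachable from the initial states S₀ if and only if its orbit [s]_G is reachable from S₀_G = { [s]_G : s ∈ S₀ } in the quotient structure M_G. -/
/-- A state `s` of `M` is reachable from the initial states `S₀` iff its orbit
`[s]_G` is reachable from `S₀_G = { [s]_G : s ∈ S₀ }` in the quotient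
structure `M_G`. -/
theorem reachable_iff_orbit_reachable {S : Type*}
    (G : Subgroup (Equiv.Perm S)) (R : S → S → Prop) (S0 : Set S)
    (hR : ∀ π ∈ G, ∀ s t : S, R s t ↔ R (π s) (π t))
    (hS0 : ∀ π ∈ G, (π : S → S) '' S0 = S0)
    (orbit : S → Set S)
    (horbit : ∀ s : S, orbit s = {t : S | ∃ π ∈ G, t = π s})
    (RG : Set S → Set S → Prop)
    (hRG : ∀ O P : Set S,
      RG O P ↔ ∃ s t : S, O = orbit s ∧ P = orbit t ∧ R s t)
    (s : S) :
    (∃ s0 ∈ S0, Relation.ReflTransGen R s0 s) ↔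
      (∃ O0 ∈ {O : Set S | ∃ s0 ∈ S0, O = orbit s0},
        Relation.ReflTransGen RG O0 (orbit s)) := by
  have hmem : ∀ u : S, u ∈ orbit u := by
    intro u; rw [horbit]; exact ⟨1, G.one_mem, rfl⟩
  have hmap : ∀ π ∈ G, ∀ a b : S, Relation.ReflTransGen R a b →
      Relation.ReflTransGen R (π a) (π b) := by
    intro π hπ a b h
    induction h with
    | refl => exact .refl
    | tail _ hbc ih => exact ih.tail ((hR π hπ _ _).mp hbc)
  have hS0mem : ∀ π ∈ G, ∀ u ∈ S0, (π : Equiv.Perm S) u ∈ S0 := by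
    intro π hπ u hu
    rw [← hS0 π hπ]; exact ⟨u, hu, rfl⟩
  constructor
  · rintro ⟨s0, hs0, h⟩
    refine ⟨orbit s0, ⟨s0, hs0, rfl⟩, ?_⟩
    induction h with
    | refl => exact .refl
    | tail _ hbc ih =>
      exact ih.tail ((hRG _ _).mpr ⟨_, _, rfl, rfl, hbc⟩)
  · rintro ⟨O0, ⟨s0, hs0, rfl⟩, h⟩
    have key : ∀ O : Set S, Relation.ReflTransGen RG (orbit s0) O →
        ∃ u, O = orbit u ∧ ∃ s0' ∈ S0, Relation.ReflTransGen R s0' u := by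
      intro O h
      induction h with
      | refl => exact ⟨s0, rfl, s0, hs0, .refl⟩
      | tail _ hbc ih =>
        obtain ⟨u, rfl, s0', hs0', hpath⟩ := ih
        obtain ⟨a, t, hab, rfl, hat⟩ := (hRG _ _).mp hbc
        have : a ∈ orbit u := hab ▸ hmem a
        rw [horbit] at this
        obtain ⟨π, hπ, rfl⟩ := this
        exact ⟨t, rfl, π s0', hS0mem π hπ s0' hs0',
          (hmap π hπ _ _ hpath).tail hat⟩
    obtain ⟨u, hu, s0', hs0', hpath⟩ := key _ h
    have : s ∈ orbit u := hu ▸ hmem s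
    rw [horbit] at this
    obtain ⟨π, hπ, hs⟩ := this
    exact ⟨π s0', hS0mem π hπ s0' hs0', hs ▸ hmap π hπ _ _ hpath⟩
end

section
/- A symmetry-invariant safety property holds on M iff it holds on M_G: for a set of 'bad' states B ⊆ S closed under G (π(B) = B for all π ∈ G), no reachable state of M lies in B if and only if no reachable orbit of M_G is the orbit of a state in B. -/
/-- A symmetry-invariant safety property holds on `M` iff it holds on `M_G`:
for a set of bad states `B` closed under `G`, no reachable state of `M` lies
in `B` iff no reachable orbit of `M_G` is the orbit of a state in `B`. -/
theorem safety_iff_quotient_safety {S : Type*}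
    (G : Subgroup (Equiv.Perm S)) (R : S → S → Prop) (S0 B : Set S)
    (hR : ∀ π ∈ G, ∀ s t : S, R s t ↔ R (π s) (π t))
    (hS0 : ∀ π ∈ G, (π : S → S) '' S0 = S0)
    (hB : ∀ π ∈ G, (π : S → S) '' B = B)
    (orbit : S → Set S)
    (horbit : ∀ s : S, orbit s = {t : S | ∃ π ∈ G, t = π s})
    (RG : Set S → Set S → Prop)
    (hRG : ∀ O P : Set S,
      RG O P ↔ ∃ s t : S, O = orbit s ∧ P = orbit t ∧ R s t) :
    (∀ s : S, (∃ s0 ∈ S0, Relation.ReflTransGen R s0 s) → s ∉ B) ↔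
      (∀ O : Set S,
        (∃ O0 ∈ {O' : Set S | ∃ s0 ∈ S0, O' = orbit s0},
          Relation.ReflTransGen RG O0 O) →
        ∀ b ∈ B, O ≠ orbit b) := by
  -- orbit invariance under G
  have horb_inv : ∀ π ∈ G, ∀ s : S, orbit ((π : Equiv.Perm S) s) = orbit s := by
    intro π hπ s
    rw [horbit, horbit]
    ext t
    constructor
    · rintro ⟨σ, hσ, rfl⟩
      exact ⟨σ * π, mul_mem hσ hπ, rfl⟩
    · rintro ⟨σ, hσ, rfl⟩
      refine ⟨σ * π⁻¹, mul_mem hσ (inv_mem hπ), ?_⟩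
      simp
  have hmem_self : ∀ s : S, s ∈ orbit s := by
    intro s; rw [horbit]; exact ⟨1, one_mem G, rfl⟩
  have horb_eq : ∀ u t : S, orbit u = orbit t → ∃ π ∈ G, t = (π : Equiv.Perm S) u := by
    intro u t h
    have : t ∈ orbit u := h ▸ hmem_self t
    rw [horbit] at this; exact this
  constructor
  · intro hsafe O hO b hb hOb
    obtain ⟨O0, ⟨s0, hs0, rfl⟩, hreach⟩ := hO
    -- lift the quotient path
    have key : ∀ P, Relation.ReflTransGen RG (orbit s0) P →
        ∃ t : S, P = orbit t ∧ Relation.ReflTransGen R s0 t := by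
      intro P hP
      induction hP with
      | refl => exact ⟨s0, rfl, Relation.ReflTransGen.refl⟩
      | tail _ hstep ih =>
        obtain ⟨t, rfl, ht⟩ := ih
        obtain ⟨u, v, huv, rfl, hRuv⟩ := (hRG _ _).1 hstep
        obtain ⟨π, hπ, rfl⟩ := horb_eq _ _ huv.symm
        refine ⟨(π : Equiv.Perm S) v, (horb_inv π hπ v).symm, ht.tail ?_⟩
        exact (hR π hπ u v).1 hRuv
    obtain ⟨t, rfl, ht⟩ := key O hreach
    obtain ⟨π, hπ, rfl⟩ := horb_eq _ _ hOb.symm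
    have : (π : Equiv.Perm S) b ∈ B := by
      rw [← hB π hπ]; exact ⟨b, hb, rfl⟩
    exact hsafe _ ⟨s0, hs0, ht⟩ this
  · have proj : ∀ a c : S, Relation.ReflTransGen R a c →
        Relation.ReflTransGen RG (orbit a) (orbit c) := by
      intro a c h
      induction h with
      | refl => exact Relation.ReflTransGen.refl
      | tail _ hstep ih =>
        exact ih.tail ((hRG _ _).2 ⟨_, _, rfl, rfl, hstep⟩)
    intro hsafe s ⟨s0, hs0, hreach⟩ hsB
    exact hsafe (orbit s) ⟨orbit s0, ⟨s0, hs0, rfl⟩, proj s0 s hreach⟩ s hsB rfl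
end

section
/- The dynamic-symmetry-reduction fixpoint computes the representatives of reachable states: the least fixpoint of Z ↦ Init ∪ α(post_R(Z)) starting from α(Init) equals { rep([s]) : s reachable from Init via R }, where α maps each state to its orbit representative and rep is G-invariant (rep([π(s)]) = rep([s])), provided Init is closed under taking representatives, and R is invariant under G. -/
/-! Reachable states form the least set containing `Init` and closed under `post R`. Since `rep s`
lies in the orbit of `s` and `R` is `G`-invariant, the successors of `rep s` are, up to `rep`, the
successors of `s`; so `rep` commutes with taking successors modulo `rep`, and applying `rep` to
the fixpoint equation of the reachable states gives the reduced one. -/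

open Relation Set

namespace SymmetryReduction

variable {S : Type*}

def post (R : S → S → Prop) (Z : Set S) : Set S := {t | ∃ z ∈ Z, R z t}

def reach (R : S → S → Prop) (Init : Set S) : Set S := {s | ∃ s0 ∈ Init, ReflTransGen R s0 s}

theorem post_mono {R : S → S → Prop} {Y Z : Set S} (h : Y ⊆ Z) : post R Y ⊆ post R Z :=
  fun _ ⟨z, hz, hzt⟩ => ⟨z, h hz, hzt⟩

theorem union_post_reach (R : S → S → Prop) (Init : Set S) :
    Init ∪ post R (reach R Init) = reach R Init := by
  ext t
  constructor
  · rintro (ht | ⟨z, ⟨s0, hs0, hz⟩, hzt⟩)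
    · exact ⟨t, ht, .refl⟩
    · exact ⟨s0, hs0, hz.tail hzt⟩
  · rintro ⟨s0, hs0, hreach⟩
    rcases hreach.cases_tail with rfl | ⟨z, hz, hzt⟩
    · exact .inl hs0
    · exact .inr ⟨z, ⟨s0, hs0, hz⟩, hzt⟩

theorem reach_subset {R : S → S → Prop} {Init Y : Set S} (hInit : Init ⊆ Y)
    (hpost : post R Y ⊆ Y) : reach R Init ⊆ Y := by
  rintro s ⟨s0, hs0, hreach⟩
  induction hreach with
  | refl => exact hInit hs0
  | tail _ hbc ih => exact hpost ⟨_, ih, hbc⟩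

variable {G : Subgroup (Equiv.Perm S)} {R : S → S → Prop}

theorem rel_perm_left_iff (hR : ∀ π ∈ G, ∀ s t : S, R s t ↔ R (π s) (π t))
    {π : Equiv.Perm S} (hπ : π ∈ G) (s t : S) : R (π s) t ↔ R s (π⁻¹ t) := by
  simpa using (hR π hπ s (π⁻¹ t)).symm

theorem image_post_image_rep {rep : S → S} (hrep_orbit : ∀ s : S, ∃ π ∈ G, rep s = π s)
    (hrep_inv : ∀ π ∈ G, ∀ s : S, rep (π s) = rep s)
    (hR : ∀ π ∈ G, ∀ s t : S, R s t ↔ R (π s) (π t)) (A : Set S) :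
    rep '' post R (rep '' A) = rep '' post R A := by
  apply Subset.antisymm
  · rintro _ ⟨t, ⟨_, ⟨a, ha, rfl⟩, hat⟩, rfl⟩
    obtain ⟨π, hπ, hrep⟩ := hrep_orbit a
    rw [hrep, rel_perm_left_iff hR hπ] at hat
    refine ⟨π⁻¹ t, ⟨a, ha, hat⟩, ?_⟩
    simpa using (hrep_inv π hπ (π⁻¹ t)).symm
  · rintro _ ⟨t, ⟨a, ha, hat⟩, rfl⟩
    obtain ⟨π, hπ, hrep⟩ := hrep_orbit a
    refine ⟨π t, ⟨rep a, mem_image_of_mem rep ha, ?_⟩, hrep_inv π hπ t⟩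
    rw [hrep]
    exact (hR π hπ a t).mp hat

theorem union_image_post_image_reach {rep : S → S} {Init : Set S}
    (hpost : ∀ A : Set S, rep '' post R (rep '' A) = rep '' post R A)
    (hInit_rep : rep '' Init = Init) :
    Init ∪ rep '' post R (rep '' reach R Init) = rep '' reach R Init :=
  calc Init ∪ rep '' post R (rep '' reach R Init)
      = rep '' Init ∪ rep '' post R (reach R Init) := by rw [hpost, hInit_rep]
    _ = rep '' reach R Init := by rw [← image_union, union_post_reach]

theorem image_reach_subset {rep : S → S} {Init Z : Set S}
    (hpost : ∀ A : Set S, rep '' post R (rep '' A) = rep '' post R A)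
    (hInit : rep '' Init ⊆ Z) (hpost_sub : rep '' post R Z ⊆ Z) : rep '' reach R Init ⊆ Z := by
  refine image_subset_iff.mpr (reach_subset (image_subset_iff.mp hInit) ?_)
  calc post R (rep ⁻¹' Z) ⊆ rep ⁻¹' (rep '' post R (rep ⁻¹' Z)) := subset_preimage_image _ _
    _ = rep ⁻¹' (rep '' post R (rep '' (rep ⁻¹' Z))) := by rw [hpost]
    _ ⊆ rep ⁻¹' Z :=
      preimage_mono <| (image_mono (post_mono (image_preimage_subset _ _))).trans hpost_sub

end SymmetryReduction

open SymmetryReduction in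
theorem dynamic_symmetry_reduction_fixpoint_general {S : Type*}
    (G : Subgroup (Equiv.Perm S)) (R : S → S → Prop) (Init : Set S)
    (rep : S → S)
    (hrep_orbit : ∀ s : S, ∃ π ∈ G, rep s = π s)
    (hrep_inv : ∀ π ∈ G, ∀ s : S, rep (π s) = rep s)
    (hR : ∀ π ∈ G, ∀ s t : S, R s t ↔ R (π s) (π t))
    (hInit_rep : rep '' Init = Init) :
    IsLeast {Z : Set S | Init ∪ rep '' {t : S | ∃ z ∈ Z, R z t} = Z}
      {t : S | ∃ s : S, (∃ s0 ∈ Init, Relation.ReflTransGen R s0 s) ∧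
        t = rep s} := by
  have hpost := image_post_image_rep hrep_orbit hrep_inv hR
  have hW : {t : S | ∃ s : S, (∃ s0 ∈ Init, Relation.ReflTransGen R s0 s) ∧ t = rep s} =
      rep '' reach R Init := by
    simp only [image, eq_comm (b := rep _)]
    rfl
  rw [hW]
  refine ⟨union_image_post_image_reach hpost hInit_rep, fun Z hZ => ?_⟩
  have hZ : Init ∪ rep '' post R Z = Z := hZ
  exact image_reach_subset hpost (hInit_rep.subset.trans (subset_union_left.trans hZ.subset))
    (subset_union_right.trans hZ.subset)

/-- The dynamic-symmetry-reduction fixpoint computes the representatives of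
reachable states: the least fixpoint of `Z ↦ Init ∪ α(post_R Z)` (with
`α T = rep '' T`) equals `{ rep s : s reachable from Init via R }`, provided
`rep` picks a `G`-invariant representative from each orbit, `Init` is closed
under taking representatives, and `R` and `Init` are invariant under `G`. -/
theorem dynamic_symmetry_reduction_fixpoint {S : Type*}
    (G : Subgroup (Equiv.Perm S)) (R : S → S → Prop) (Init : Set S)
    (rep : S → S)
    (hrep_orbit : ∀ s : S, ∃ π ∈ G, rep s = π s)
    (hrep_inv : ∀ π ∈ G, ∀ s : S, rep (π s) = rep s)
    (hR : ∀ π ∈ G, ∀ s t : S, R s t ↔ R (π s) (π t))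
    (hInit : ∀ π ∈ G, (π : S → S) '' Init = Init)
    (hInit_rep : rep '' Init = Init) :
    IsLeast {Z : Set S | Init ∪ rep '' {t : S | ∃ z ∈ Z, R z t} = Z}
      {t : S | ∃ s : S, (∃ s0 ∈ Init, Relation.ReflTransGen R s0 s) ∧
        t = rep s} :=
  dynamic_symmetry_reduction_fixpoint_general G R Init rep hrep_orbit hrep_inv hR hInit_rep
end

section
/- Correctness of symmetry-reduced component-wise exploration: with R = ⋃ R_i invariant under symmetry group G and abstraction α mapping states to orbit representatives, the fixpoint of the component-wise iteration Z ↦ Z ∪ α(post_{R_i}(Z)) (cycling over all i until stabilization, starting from α(Init)) equals { rep([s]) : s reachable from Init via R }. -/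
def symRound {S : Type*} {n : ℕ} (Rc : Fin n → S → S → Prop) (rep : S → S)
    (Z : Set S) : Set S :=
  (List.finRange n).foldl
    (fun W i => W ∪ rep '' {t : S | ∃ z ∈ W, Rc i z t}) Z

/-!
Every set produced by the iteration consists of representatives of reachable states: if
`rep s = π s` and `R (π s) t`, then `R s (π⁻¹ t)` and `rep (π⁻¹ t) = rep t`. Conversely a fixpoint
`Z` containing `α(Init)` is closed under `rep ∘ post_R`, and `R s t` gives `R (π s) (π t)` with
`π s = rep s ∈ Z` and `rep (π t) = rep t`; so by induction along a path every reachable state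
has its representative in `Z`. Termination holds because the iterates increase in the finite
lattice `Set S`.
-/

section FoldSup

variable {α ι : Type*} [SemilatticeSup α] (F : ι → α → α)

theorem le_foldl_sup_self (l : List ι) (x : α) :
    x ≤ l.foldl (fun w i => w ⊔ F i w) x := by
  induction l generalizing x with
  | nil => exact le_rfl
  | cons i l ih => exact le_sup_left.trans (ih _)

theorem apply_le_foldl_sup_self (hF : ∀ i, Monotone (F i)) {l : List ι} {i : ι} (hi : i ∈ l)
    (x : α) : F i x ≤ l.foldl (fun w i => w ⊔ F i w) x := by
  induction l generalizing x with
  | nil => cases hi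
  | cons j l ih =>
    rcases List.mem_cons.mp hi with rfl | hi
    · exact le_sup_right.trans (le_foldl_sup_self F l _)
    · exact (hF i le_sup_left).trans (ih hi _)

theorem foldl_sup_self_le {l : List ι} {x c : α} (hx : x ≤ c) (hc : ∀ i, ∀ w ≤ c, F i w ≤ c) :
    l.foldl (fun w i => w ⊔ F i w) x ≤ c := by
  induction l generalizing x with
  | nil => exact hx
  | cons i l ih => exact ih (sup_le hx (hc i x hx))

end FoldSup

section Post

variable {S ι : Type*}

def post (R : S → S → Prop) (W : Set S) : Set S :=
  {t | ∃ z ∈ W, R z t}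

theorem post_mono (R : S → S → Prop) : Monotone (post R) :=
  fun _ _ h _ ⟨z, hz, hzt⟩ => ⟨z, h hz, hzt⟩

theorem post_exists_eq_iUnion (Rc : ι → S → S → Prop) (W : Set S) :
    post (fun a b => ∃ i, Rc i a b) W = ⋃ i, post (Rc i) W := by
  ext t
  simp only [post, Set.mem_ofPred_eq, Set.mem_iUnion]
  grind

end Post

section Symmetry

variable {S : Type*} {G : Subgroup (Equiv.Perm S)} {rep : S → S} {R : S → S → Prop}

theorem exists_rel_of_rel_rep (hrep_orbit : ∀ s, ∃ π ∈ G, rep s = π s)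
    (hrep_inv : ∀ π ∈ G, ∀ s, rep (π s) = rep s) (hR : ∀ π ∈ G, ∀ s t, R s t ↔ R (π s) (π t))
    {s t : S} (h : R (rep s) t) : ∃ t', R s t' ∧ rep t' = rep t := by
  obtain ⟨π, hπ, hπs⟩ := hrep_orbit s
  refine ⟨π⁻¹ t, ?_, hrep_inv _ (inv_mem hπ) t⟩
  simpa [hπs] using (hR π⁻¹ (inv_mem hπ) _ _).mp h

theorem exists_rel_rep_of_rel (hrep_orbit : ∀ s, ∃ π ∈ G, rep s = π s)
    (hrep_inv : ∀ π ∈ G, ∀ s, rep (π s) = rep s) (hR : ∀ π ∈ G, ∀ s t, R s t ↔ R (π s) (π t))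
    {s t : S} (h : R s t) : ∃ t', R (rep s) t' ∧ rep t' = rep t := by
  obtain ⟨π, hπ, hπs⟩ := hrep_orbit s
  exact ⟨π t, hπs ▸ (hR π hπ s t).mp h, hrep_inv π hπ t⟩

theorem image_post_image_subset (hrep_orbit : ∀ s, ∃ π ∈ G, rep s = π s)
    (hrep_inv : ∀ π ∈ G, ∀ s, rep (π s) = rep s) (hR : ∀ π ∈ G, ∀ s t, R s t ↔ R (π s) (π t))
    {A : Set S} (hA : ∀ s ∈ A, ∀ t, R s t → t ∈ A) : rep '' post R (rep '' A) ⊆ rep '' A := by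
  rintro _ ⟨t, ⟨_, ⟨s, hs, rfl⟩, hst⟩, rfl⟩
  obtain ⟨t', hst', hrep⟩ := exists_rel_of_rel_rep hrep_orbit hrep_inv hR hst
  exact ⟨t', hA s hs t' hst', hrep⟩

theorem image_reflTransGen_subset (hrep_orbit : ∀ s, ∃ π ∈ G, rep s = π s)
    (hrep_inv : ∀ π ∈ G, ∀ s, rep (π s) = rep s) (hR : ∀ π ∈ G, ∀ s t, R s t ↔ R (π s) (π t))
    {A Z : Set S} (hA : rep '' A ⊆ Z) (hZ : rep '' post R Z ⊆ Z) :
    rep '' {s | ∃ a ∈ A, Relation.ReflTransGen R a s} ⊆ Z := by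
  rintro _ ⟨s, ⟨a, ha, has⟩, rfl⟩
  induction has with
  | refl => exact hA ⟨a, ha, rfl⟩
  | tail _ hst ih =>
    obtain ⟨t', hst', hrep⟩ := exists_rel_rep_of_rel hrep_orbit hrep_inv hR hst
    exact hrep ▸ hZ ⟨t', ⟨_, ih, hst'⟩, rfl⟩

end Symmetry

section SymRound

variable {S : Type*} {n : ℕ} (Rc : Fin n → S → S → Prop) (rep : S → S)

theorem subset_symRound (Z : Set S) : Z ⊆ symRound Rc rep Z :=
  le_foldl_sup_self _ _ Z

theorem image_post_subset_symRound (i : Fin n) (Z : Set S) :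
    rep '' post (Rc i) Z ⊆ symRound Rc rep Z :=
  apply_le_foldl_sup_self _ (fun i _ _ h => Set.image_mono (post_mono (Rc i) h))
    (List.mem_finRange i) Z

theorem symRound_subset {Z C : Set S} (hZ : Z ⊆ C)
    (hC : ∀ i, ∀ W ⊆ C, rep '' post (Rc i) W ⊆ C) : symRound Rc rep Z ⊆ C :=
  foldl_sup_self_le _ hZ hC

theorem monotone_of_eq_symRound {g : ℕ → Set S} (hg : ∀ k, g (k + 1) = symRound Rc rep (g k)) :
    Monotone g :=
  monotone_nat_of_le_succ fun k => (hg k).symm ▸ subset_symRound Rc rep (g k)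

theorem image_post_exists_subset_of_symRound_subset {Z : Set S}
    (hZ : symRound Rc rep Z ⊆ Z) : rep '' post (fun a b => ∃ i, Rc i a b) Z ⊆ Z := by
  rw [post_exists_eq_iUnion, Set.image_iUnion]
  exact Set.iUnion_subset fun i => (image_post_subset_symRound Rc rep i Z).trans hZ

variable {G : Subgroup (Equiv.Perm S)}

theorem symRound_subset_image (hrep_orbit : ∀ s, ∃ π ∈ G, rep s = π s)
    (hrep_inv : ∀ π ∈ G, ∀ s, rep (π s) = rep s)
    (hR : ∀ π ∈ G, ∀ s t, (∃ i, Rc i s t) ↔ ∃ i, Rc i (π s) (π t)) {A Z : Set S}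
    (hA : ∀ s ∈ A, ∀ t, (∃ i, Rc i s t) → t ∈ A) (hZ : Z ⊆ rep '' A) :
    symRound Rc rep Z ⊆ rep '' A := by
  refine symRound_subset Rc rep hZ fun i W hW => ?_
  calc rep '' post (Rc i) W
      ⊆ rep '' post (fun a b => ∃ i, Rc i a b) W :=
        Set.image_mono fun t ⟨z, hz, hzt⟩ => ⟨z, hz, i, hzt⟩
    _ ⊆ rep '' post (fun a b => ∃ i, Rc i a b) (rep '' A) := Set.image_mono (post_mono _ hW)
    _ ⊆ rep '' A := image_post_image_subset hrep_orbit hrep_inv hR hA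

end SymRound

theorem exists_eq_succ_of_monotone {α : Type*} [PartialOrder α] [WellFoundedGT α] {g : ℕ → α}
    (hg : Monotone g) : ∃ k, g k = g (k + 1) := by
  obtain ⟨k, hk⟩ := WellFoundedGT.monotone_chain_condition ⟨g, hg⟩
  exact ⟨k, hk (k + 1) k.le_succ⟩

theorem sym_componentwise_exploration_correct_general {S : Type*} [Finite S] {n : ℕ}
    (G : Subgroup (Equiv.Perm S)) (Rc : Fin n → S → S → Prop) (Init : Set S)
    (rep : S → S)
    (hrep_orbit : ∀ s : S, ∃ π ∈ G, rep s = π s)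
    (hrep_inv : ∀ π ∈ G, ∀ s : S, rep (π s) = rep s)
    (hR : ∀ π ∈ G, ∀ s t : S,
      (∃ i : Fin n, Rc i s t) ↔ (∃ i : Fin n, Rc i (π s) (π t)))
    (g : ℕ → Set S) (hg0 : g 0 = rep '' Init)
    (hgs : ∀ k : ℕ, g (k + 1) = symRound Rc rep (g k)) :
    (∃ k : ℕ, g k = g (k + 1)) ∧
      ∀ k : ℕ, g k = g (k + 1) →
        g k = {t : S | ∃ s : S,
          (∃ s0 ∈ Init,
            Relation.ReflTransGen (fun a b : S => ∃ i : Fin n, Rc i a b) s0 s) ∧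
          t = rep s} := by
  set R : S → S → Prop := fun a b => ∃ i, Rc i a b
  set Reach : Set S := {s | ∃ s0 ∈ Init, Relation.ReflTransGen R s0 s}
  have hmono := monotone_of_eq_symRound Rc rep hgs
  refine ⟨exists_eq_succ_of_monotone hmono, fun k hfix => ?_⟩
  have htarget : {t | ∃ s, (∃ s0 ∈ Init, Relation.ReflTransGen R s0 s) ∧ t = rep s} =
      rep '' Reach := by
    ext t
    exact exists_congr fun s => and_congr_right' eq_comm
  rw [htarget]
  have hsound : ∀ m, g m ⊆ rep '' Reach := by
    intro m
    induction m with
    | zero => exact hg0 ▸ Set.image_mono fun s hs => ⟨s, hs, .refl⟩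
    | succ m ih =>
      exact hgs m ▸ symRound_subset_image Rc rep hrep_orbit hrep_inv hR
        (fun s ⟨s0, hs0, hreach⟩ t hst => ⟨s0, hs0, hreach.tail hst⟩) ih
  refine (hsound k).antisymm (image_reflTransGen_subset hrep_orbit hrep_inv hR ?_ ?_)
  · exact hg0 ▸ hmono k.zero_le
  · exact image_post_exists_subset_of_symRound_subset Rc rep (hfix.trans (hgs k)).ge

/-- Correctness of symmetry-reduced component-wise exploration: with
`R = ⋃ R_i` invariant under the symmetry group `G` and abstraction
`α T = rep '' T`, the componentwise iteration starting from `α(Init)` and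
cycling over all components stabilizes, and its fixpoint equals
`{ rep s : s reachable from Init via R }`. -/
theorem sym_componentwise_exploration_correct {S : Type*} [Finite S] {n : ℕ}
    (G : Subgroup (Equiv.Perm S)) (Rc : Fin n → S → S → Prop) (Init : Set S)
    (rep : S → S)
    (hrep_orbit : ∀ s : S, ∃ π ∈ G, rep s = π s)
    (hrep_inv : ∀ π ∈ G, ∀ s : S, rep (π s) = rep s)
    (hR : ∀ π ∈ G, ∀ s t : S,
      (∃ i : Fin n, Rc i s t) ↔ (∃ i : Fin n, Rc i (π s) (π t)))
    (hInit : ∀ π ∈ G, (π : S → S) '' Init = Init)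
    (g : ℕ → Set S) (hg0 : g 0 = rep '' Init)
    (hgs : ∀ k : ℕ, g (k + 1) = symRound Rc rep (g k)) :
    (∃ k : ℕ, g k = g (k + 1)) ∧
      ∀ k : ℕ, g k = g (k + 1) →
        g k = {t : S | ∃ s : S,
          (∃ s0 ∈ Init,
            Relation.ReflTransGen (fun a b : S => ∃ i : Fin n, Rc i a b) s0 s) ∧
          t = rep s} :=
  sym_componentwise_exploration_correct_general G Rc Init rep hrep_orbit hrep_inv hR g hg0 hgs
end
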